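/- arXiv:0706.4102 — 6 statements merged into one kernel-verified Lean document; each statement's English description precedes it below -/
import Mathlib

section
/- For every connected graph G with m ≥ 1 edges, the Ramsey number satisfies r(K_3, G) ≤ 3m; that is, every red/blue coloring of the edges of the complete graph on 3m vertices contains either a red triangle or a blue copy of G. -/
open SimpleGraph

/-- `G.ContainsCopy H` means the graph `G` contains a subgraph isomorphic to `H`,
i.e. there is an injective graph homomorphism from `H` into `G`. -/
def SimpleGraph.ContainsCopy {α β : Type*} (G : SimpleGraph α) (H : SimpleGraph β) : Prop :=
  ∃ f : H →g G, Function.Injective f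

/-- `RamseyProp n H G` : every graph `Γ` on `n` vertices contains a copy of `H`,
or its complement contains a copy of `G`. -/
def RamseyProp {α β : Type*} (n : ℕ) (H : SimpleGraph α) (G : SimpleGraph β) : Prop :=
  ∀ Γ : SimpleGraph (Fin n), Γ.ContainsCopy H ∨ Γᶜ.ContainsCopy G

/-- The Ramsey number `r(H, G)` : the least positive `n` such that every graph on `n`
vertices contains a copy of `H` or its complement contains a copy of `G`. -/
noncomputable def ramseyNumber {α β : Type*} (H : SimpleGraph α) (G : SimpleGraph β) : ℕ :=
  sInf {n : ℕ | 0 < n ∧ RamseyProp n H G}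

/-! Let `Γ` be triangle-free on `V` and `H` a graph with `e` edges on `n + 1 ≤ |V|` vertices,
where `2e + n + 1 ≤ |V| + 1`; we embed `H` into `Γᶜ` by induction on `n`. If some vertex of `Γ`
has at least `n + 1` neighbours, they form an independent set of `Γ` and any injection of `H`
into it will do. Otherwise all degrees of `Γ` are at most `n`. Remove a vertex `v` of minimum
degree `d` from `H`, so that `d (n + 1) ≤ 2e`, embed the rest by induction, and send `v` to a
vertex avoiding the `n` images already used and the at most `d n` neighbours in `Γ` of the
images of the neighbours of `v`. A connected graph with `m` edges has at most `m + 1` vertices,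
so `3m` vertices suffice for it. -/

open Finset Fintype

namespace SimpleGraph

variable {V γ : Type*}

theorem minDegree_mul_card_le [Fintype V] (G : SimpleGraph V) [DecidableRel G.Adj] :
    G.minDegree * card V ≤ 2 * #G.edgeFinset := by
  rw [← sum_degrees_eq_twice_card_edges, mul_comm, ← Finset.card_univ, ← smul_eq_mul]
  exact card_nsmul_le_sum _ _ _ fun v _ => G.minDegree_le_degree v

theorem IsIndepSet.isContained_compl {G : SimpleGraph V} {s : Set V} (hs : G.IsIndepSet s)
    (H : SimpleGraph γ) (h : Nonempty (γ ↪ s)) : H ⊑ Gᶜ := by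
  refine (isContained_top_iff.2 h).trans ⟨(Embedding.induce s).toCopy.comp (Copy.ofLE _ _ ?_)⟩
  rw [induce_eq_top.2 ((isClique_compl G).2 hs)]

theorem exists_notMem_forall_not_adj [Fintype V] [DecidableEq V] (G : SimpleGraph V)
    [DecidableRel G.Adj] {k : ℕ} (hG : ∀ x, G.degree x ≤ k) (A B : Finset V)
    (h : #A + #B * k < card V) : ∃ w ∉ A, ∀ y ∈ B, ¬G.Adj y w := by
  have hbad : #(A ∪ B.biUnion fun y => G.neighborFinset y) < #(univ : Finset V) := calc
    _ ≤ #A + ∑ y ∈ B, #(G.neighborFinset y) :=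
      (card_union_le _ _).trans (by gcongr; exact card_biUnion_le)
    _ ≤ #A + #B * k := by
      gcongr
      simpa using sum_le_card_nsmul B _ k fun y _ =>
        (card_neighborFinset_eq_degree G y).trans_le (hG y)
    _ < _ := by simpa using h
  obtain ⟨w, -, hw⟩ := exists_mem_notMem_of_card_lt_card hbad
  simp only [mem_union, mem_biUnion, mem_neighborFinset, not_or, not_exists, not_and] at hw
  exact ⟨w, hw.1, hw.2⟩

theorem isContained_of_copy_induce_compl_singleton [DecidableEq γ] {H : SimpleGraph γ}
    {G : SimpleGraph V} {v : γ} (f : Copy (H.induce {v}ᶜ) G) {w : V} (hw : w ∉ Set.range f)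
    (hadj : ∀ u (hu : u ∈ ({v}ᶜ : Set γ)), H.Adj v u → G.Adj w (f ⟨u, hu⟩)) : H ⊑ G := by
  let F : γ → V := fun x => if hx : x = v then w else f ⟨x, hx⟩
  have hF : ∀ x (hx : x ∈ ({v}ᶜ : Set γ)), F x = f ⟨x, hx⟩ := fun x hx => dif_neg hx
  have hFv : F v = w := dif_pos rfl
  have hFw : ∀ x (hx : x ∈ ({v}ᶜ : Set γ)), f ⟨x, hx⟩ ≠ w := fun x hx h => hw ⟨_, h⟩
  refine ⟨⟨⟨F, fun {a b} hab => ?_⟩, fun a b hab => ?_⟩⟩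
  · by_cases ha : a = v <;> by_cases hb : b = v
    · exact absurd (ha.trans hb.symm) hab.ne
    · subst ha; rw [hFv, hF b hb]; exact hadj b hb hab
    · subst hb; rw [hFv, hF a ha]; exact (hadj a ha hab.symm).symm
    · rw [hF a ha, hF b hb]; exact f.toHom.map_adj (induce_adj.2 hab)
  · change F a = F b at hab
    by_cases ha : a = v <;> by_cases hb : b = v
    · exact ha.trans hb.symm
    · rw [ha, hFv, hF b hb] at hab; exact absurd hab.symm (hFw b hb)
    · rw [hb, hFv, hF a ha] at hab; exact absurd hab (hFw a ha)
    · rw [hF a ha, hF b hb] at hab; exact congrArg Subtype.val (f.injective hab)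

theorem isContained_compl_of_cliqueFree_three [Fintype V] {Γ : SimpleGraph V}
    (hΓ : Γ.CliqueFree 3) (H : SimpleGraph γ) [Fintype γ] [DecidableRel H.Adj]
    (hγ : card γ ≤ card V) (hH : 2 * #H.edgeFinset + card γ ≤ card V + 1) : H ⊑ Γᶜ := by
  classical
  induction hn : card γ generalizing γ with
  | zero =>
    have := card_eq_zero_iff.1 hn
    exact .of_isEmpty
  | succ n ih =>
    by_cases hdeg : ∃ x, n + 1 ≤ Γ.degree x
    · obtain ⟨x, hx⟩ := hdeg
      refine (isIndepSet_neighborSet_of_triangleFree _ hΓ x).isContained_compl H ?_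
      exact Function.Embedding.nonempty_of_card_le
        (by rw [card_neighborSet_eq_degree, hn]; exact hx)
    push Not at hdeg
    have : Nonempty γ := card_pos_iff.1 (by omega)
    obtain ⟨v, hv⟩ := H.exists_minimal_degree_vertex
    have hcard : card ({v}ᶜ : Set γ) = n := by rw [Fintype.card_compl_set]; simp [hn]
    have hedge : #(H.induce {v}ᶜ).edgeFinset = #H.edgeFinset - H.degree v := by
      rw [card_edgeFinset_induce_compl_singleton, card_edgeFinset_deleteIncidenceSet]
    have hmin := H.minDegree_mul_card_le
    rw [hv, hn] at hmin
    obtain ⟨f⟩ := ih (H.induce {v}ᶜ) (by omega) (by omega) hcard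
    set A := univ.image f
    set B := ((H.neighborFinset v).subtype (· ∈ ({v}ᶜ : Set γ))).image f
    have hA : #A ≤ n := card_image_le.trans (by simp [hcard])
    have hB : #B ≤ H.degree v := card_image_le.trans (by
      rw [card_subtype, ← card_neighborFinset_eq_degree]; exact card_filter_le _ _)
    -- `d (n + 1) ≤ 2 e(H)` gives `n + d n ≤ n + 2 e(H) - d`, which is `< |V|` when `d ≥ 1`.
    have hroom : #A + #B * n < card V := by
      rcases (H.degree v).eq_zero_or_pos with hd | hd
      · nlinarith
      · nlinarith
    obtain ⟨w, hwA, hwB⟩ :=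
      Γ.exists_notMem_forall_not_adj (fun x => Nat.le_of_lt_succ (hdeg x)) A B hroom
    refine isContained_of_copy_induce_compl_singleton f (w := w) ?_ ?_
    · simpa [A] using hwA
    · intro u hu huv
      have hfu : f ⟨u, hu⟩ ∈ B := mem_image_of_mem f (by simpa using huv)
      exact (compl_adj _ _ _).2
        ⟨fun h => hwA (h ▸ mem_image_of_mem f (mem_univ _)), fun h => hwB _ hfu h.symm⟩

theorem IsContained.containsCopy {G : SimpleGraph V} {H : SimpleGraph γ} (h : H ⊑ G) :
    G.ContainsCopy H :=
  let ⟨c⟩ := h; ⟨c.toHom, c.injective⟩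

end SimpleGraph

theorem stmt_5 {β : Type} [Fintype β] (G : SimpleGraph β) (m : ℕ)
    (hm : G.edgeSet.ncard = m) (hm1 : 1 ≤ m) (hG : G.Connected) :
    ramseyNumber (⊤ : SimpleGraph (Fin 3)) G ≤ 3 * m ∧
    RamseyProp (3 * m) (⊤ : SimpleGraph (Fin 3)) G := by
  classical
  have hedges : #G.edgeFinset = m := by rw [← hm, Set.ncard_eq_toFinset_card']; rfl
  have hvert : card β ≤ m + 1 := by
    have h := hG.card_vert_le_card_edgeSet_add_one
    rwa [Nat.card_coe_set_eq, hm, Nat.card_eq_fintype_card] at h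
  have hramsey : RamseyProp (3 * m) (⊤ : SimpleGraph (Fin 3)) G := by
    intro Γ
    by_cases hΓ : Γ.CliqueFree 3
    · right
      refine (isContained_compl_of_cliqueFree_three hΓ G ?_ ?_).containsCopy <;> simp <;> omega
    · exact .inl ((not_cliqueFree_iff_top_isContained 3).1 hΓ).containsCopy
  exact ⟨Nat.sInf_le ⟨by omega, hramsey⟩, hramsey⟩
end

section
/- For every graph G with m ≥ 1 edges and without isolated vertices, the Ramsey number satisfies r(K_3, G) ≤ 3m. -/
open SimpleGraph

/-!
Let `Γ` be a triangle-free graph on `3m` vertices; we pack `G` with `Γ` (embed `G` into `Γᶜ`) by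
induction on `m`, writing `p` for the number of non-isolated vertices of `G`.
If `G` has an isolated edge, pack the rest; at least `3` vertices stay unused, and among any three
of them two are non-adjacent in `Γ`, which take the edge.
If some vertex of `Γ` has at least `p` neighbours, these form an independent set of `Γ` that takes
all of `G`. Otherwise remove a vertex `w` of minimum degree `d`, pack the rest, and place `w` away
from the `p - 1` used vertices and the at most `d (p - 1)` `Γ`-neighbours of its placed neighbours.
This is possible because `d p ≤ 2m` and, as there is no isolated edge, `2p ≤ 3m`, which together
give `(d + 1)(p - 1) < 3m`.
-/

open Finset

theorem Set.InjOn.update {α β : Type*} [DecidableEq α] {f : α → β} {s : Set α} {a : α} {b : β}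
    (hf : Set.InjOn f s) (ha : a ∉ s) (hb : b ∉ f '' s) :
    Set.InjOn (Function.update f a b) (insert a s) := by
  have hfa : Set.EqOn f (Function.update f a b) s := fun x hx =>
    (Function.update_of_ne (ne_of_mem_of_not_mem hx ha) _ _).symm
  rw [Set.injOn_insert ha, Function.update_self, ← hfa.image_eq]
  exact ⟨hf.congr hfa, hb⟩

namespace SimpleGraph

variable {V W : Type*}

/-- A packing of `G` with `Γ` that ignores the isolated vertices of `G`, so that it survives
deleting edges of `G` without needing room in `W` for the vertices that become isolated. -/
def SupportPacksWith (G : SimpleGraph V) (Γ : SimpleGraph W) : Prop :=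
  ∃ f : V → W, Set.InjOn f G.support ∧ ∀ ⦃a b⦄, G.Adj a b → ¬ Γ.Adj (f a) (f b)

variable {G : SimpleGraph V} {Γ : SimpleGraph W}

lemma CliqueFree.exists_ne_not_adj [DecidableEq W] (hΓ : Γ.CliqueFree 3) {s : Finset W}
    (hs : 2 < #s) : ∃ x ∈ s, ∃ y ∈ s, x ≠ y ∧ ¬ Γ.Adj x y := by
  obtain ⟨a, ha, b, hb, c, hc, hab, hac, hbc⟩ := two_lt_card.1 hs
  by_contra! h
  exact hΓ {a, b, c} (is3Clique_triple_iff.2 ⟨h a ha b hb hab, h a ha c hc hac, h b hb c hc hbc⟩)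

section Counting

variable [Fintype V] [DecidableRel G.Adj]

lemma mul_card_support_le {d : ℕ} (h : ∀ v ∈ G.support, d ≤ G.degree v) :
    d * Fintype.card G.support ≤ 2 * #G.edgeFinset := by
  rw [← sum_degrees_support_eq_twice_card_edges, ← Set.toFinset_card, mul_comm, ← smul_eq_mul]
  exact card_nsmul_le_sum _ _ _ fun v hv => h v (Set.mem_toFinset.1 hv)

lemma card_support_le : Fintype.card G.support ≤ 2 * #G.edgeFinset := by
  simpa using G.mul_card_support_le fun v hv => (G.degree_pos_iff_mem_support v).2 hv

lemma card_filter_degree_eq_one_le (hG : ∀ u v, G.Adj u v → G.degree u = 1 → G.degree v ≠ 1) :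
    #{v | G.degree v = 1} ≤ #G.edgeFinset := by
  refine card_le_card_of_forall_subsingleton (fun v e => v ∈ e) (fun v hv => ?_) fun e he => ?_
  · obtain ⟨w, hw⟩ := (G.degree_pos_iff_exists_adj v).1 (by simp [(mem_filter.1 hv).2])
    exact ⟨s(v, w), G.mem_edgeFinset.2 hw, Sym2.mem_mk_left _ _⟩
  · intro a ha b hb
    by_contra hab
    have he' : e = s(a, b) := (Sym2.mem_and_mem_iff hab).1 ⟨ha.2, hb.2⟩
    exact hG a b (G.mem_edgeFinset.1 (he' ▸ he)) (mem_filter.1 ha.1).2 (mem_filter.1 hb.1).2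

lemma two_mul_card_support_le (hG : ∀ u v, G.Adj u v → G.degree u = 1 → G.degree v ≠ 1) :
    2 * Fintype.card G.support ≤ 3 * #G.edgeFinset := by
  classical
  have hleaf : ∀ v ∈ G.support.toFinset, 2 ≤ G.degree v + if G.degree v = 1 then 1 else 0 := by
    intro v hv
    have := (G.degree_pos_iff_mem_support v).2 (Set.mem_toFinset.1 hv)
    split_ifs <;> omega
  calc 2 * Fintype.card G.support
      = ∑ _v ∈ G.support.toFinset, 2 := by simp [mul_comm]
    _ ≤ ∑ v ∈ G.support, (G.degree v + if G.degree v = 1 then 1 else 0) := sum_le_sum hleaf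
    _ = 2 * #G.edgeFinset + #{v ∈ G.support.toFinset | G.degree v = 1} := by
      rw [sum_add_distrib, sum_degrees_support_eq_twice_card_edges, sum_boole, Nat.cast_id]
    _ ≤ 2 * #G.edgeFinset + #{v | G.degree v = 1} := by
      gcongr
      exact subset_univ _
    _ ≤ 3 * #G.edgeFinset := by linarith [G.card_filter_degree_eq_one_le hG]

lemma degree_add_one_mul_card_support_sub_one_lt
    (hG : ∀ u v, G.Adj u v → G.degree u = 1 → G.degree v ≠ 1) {w : V} (hw : w ∈ G.support)
    (hmin : ∀ v ∈ G.support, G.degree w ≤ G.degree v) :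
    (G.degree w + 1) * (Fintype.card G.support - 1) < 3 * #G.edgeFinset := by
  have hdp := G.mul_card_support_le hmin
  have hp := G.two_mul_card_support_le hG
  have hd : 0 < G.degree w := (G.degree_pos_iff_mem_support w).2 hw
  obtain ⟨q, hq⟩ : ∃ q, Fintype.card G.support = q + 1 :=
    Nat.exists_eq_add_one.2 (Fintype.card_pos_iff.2 ⟨⟨w, hw⟩⟩)
  rw [hq] at hdp hp ⊢
  rw [Nat.add_sub_cancel]
  rcases Nat.lt_or_ge (G.degree w) 2 with hd1 | hd2
  · obtain h1 : G.degree w = 1 := by omega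
    rw [h1]
    omega
  · nlinarith

lemma exists_mem_support_forall_degree_le (hG : G ≠ ⊥) :
    ∃ w ∈ G.support, ∀ v ∈ G.support, G.degree w ≤ G.degree v := by
  have hne : G.support.toFinset.Nonempty := by
    rwa [Set.toFinset_nonempty, Set.nonempty_iff_ne_empty, Ne, support_eq_bot_iff]
  obtain ⟨w, hw, hmin⟩ := G.support.toFinset.exists_min_image (fun v => G.degree v) hne
  exact ⟨w, Set.mem_toFinset.1 hw, fun v hv => hmin v (Set.mem_toFinset.2 hv)⟩

lemma one_lt_degree_of_adj (hG : ∀ u v, G.Adj u v → G.degree u = 1 → G.degree v ≠ 1)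
    {w b : V} (hmin : ∀ v ∈ G.support, G.degree w ≤ G.degree v) (hwb : G.Adj w b) :
    1 < G.degree b := by
  have hw := (G.degree_pos_iff_mem_support w).2 hwb.mem_support_left
  have hb := (G.degree_pos_iff_mem_support b).2 hwb.mem_support_right
  have := hmin b hwb.mem_support_right
  have := hG w b hwb
  omega

lemma support_subset_insert_support_deleteIncidenceSet {w : V}
    (hw : ∀ b, G.Adj w b → 1 < G.degree b) :
    G.support ⊆ insert w (G.deleteIncidenceSet w).support := by
  rintro a ⟨b, hab⟩
  obtain rfl | haw := eq_or_ne a w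
  · exact Set.mem_insert a _
  obtain rfl | hbw := eq_or_ne b w
  · obtain ⟨c, hc, hca⟩ := exists_mem_ne (hw a hab.symm) b
    exact Or.inr ⟨c, deleteIncidenceSet_adj.2 ⟨(G.mem_neighborFinset _ _).1 hc, haw, hca⟩⟩
  · exact Or.inr ⟨b, deleteIncidenceSet_adj.2 ⟨hab, haw, hbw⟩⟩

lemma ncard_edgeSet_deleteIncidenceSet (w : V) :
    (G.deleteIncidenceSet w).edgeSet.ncard = G.edgeSet.ncard - G.degree w := by
  classical
  simp only [Set.ncard_eq_toFinset_card']
  exact G.card_edgeFinset_deleteIncidenceSet w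

end Counting

section Packing

lemma supportPacksWith_bot [Nonempty W] : (⊥ : SimpleGraph V).SupportPacksWith Γ :=
  ⟨fun _ => Classical.arbitrary W, by simp, fun _ _ h => h.elim⟩

lemma supportPacksWith_of_isIndepSet [Fintype V] [DecidableRel G.Adj] [Nonempty W]
    {s : Finset W} (hs : Γ.IsIndepSet s) (hcard : Fintype.card G.support ≤ #s) :
    G.SupportPacksWith Γ := by
  classical
  obtain ⟨e⟩ := Function.Embedding.nonempty_of_card_le (hcard.trans_eq (Fintype.card_coe s).symm)
  let f : V → W := fun v => if hv : v ∈ G.support then e ⟨v, hv⟩ else Classical.arbitrary W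
  have hf : ∀ v (hv : v ∈ G.support), f v = e ⟨v, hv⟩ := fun v hv => dif_pos hv
  refine ⟨f, fun a ha b hb hab => ?_, fun a b hab => ?_⟩
  · rw [hf a ha, hf b hb] at hab
    exact congrArg Subtype.val (e.injective (Subtype.ext hab))
  · rw [hf a hab.mem_support_left, hf b hab.mem_support_right]
    exact fun h => hs (e _).2 (e _).2 h.ne h

lemma supportPacksWith_of_card_support_le_degree [Fintype V] [DecidableRel G.Adj] [Fintype W]
    [DecidableRel Γ.Adj] [Nonempty W] (hΓ : Γ.CliqueFree 3) {z : W}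
    (hz : Fintype.card G.support ≤ Γ.degree z) : G.SupportPacksWith Γ :=
  supportPacksWith_of_isIndepSet (s := Γ.neighborFinset z)
    (by simpa using isIndepSet_neighborSet_of_triangleFree Γ hΓ z) hz

lemma supportPacksWith_update [DecidableEq V] {w : V} {S : Set V} {f : V → W} {y : W}
    (hf : Set.InjOn f S) (hfG : ∀ ⦃a b⦄, (G.deleteIncidenceSet w).Adj a b → ¬ Γ.Adj (f a) (f b))
    (hw : w ∉ S) (hS : G.support ⊆ insert w S) (hy : y ∉ f '' S)
    (hyΓ : ∀ b, G.Adj w b → ¬ Γ.Adj y (f b)) : G.SupportPacksWith Γ := by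
  refine ⟨Function.update f w y, (hf.update hw hy).mono hS, fun a b hab => ?_⟩
  obtain rfl | haw := eq_or_ne a w
  · rw [Function.update_self, Function.update_of_ne hab.ne']
    exact hyΓ b hab
  obtain rfl | hbw := eq_or_ne b w
  · rw [Function.update_self, Function.update_of_ne haw]
    exact fun h => hyΓ a hab.symm h.symm
  rw [Function.update_of_ne haw, Function.update_of_ne hbw]
  exact hfG (deleteIncidenceSet_adj.2 ⟨hab, haw, hbw⟩)

variable [Fintype V] [DecidableEq V] [DecidableRel G.Adj] [Fintype W] [DecidableEq W]

lemma SupportPacksWith.of_deleteIncidenceSet [DecidableRel Γ.Adj] {w : V} {k : ℕ}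
    (h : (G.deleteIncidenceSet w).SupportPacksWith Γ) (hw : ∀ b, G.Adj w b → 1 < G.degree b)
    (hΓ : ∀ z, Γ.degree z ≤ k)
    (hcard : Fintype.card (G.deleteIncidenceSet w).support + G.degree w * k < Fintype.card W) :
    G.SupportPacksWith Γ := by
  obtain ⟨f, hf, hfG⟩ := h
  let S := (G.deleteIncidenceSet w).support
  let F := S.toFinset.image f ∪ (G.neighborFinset w).biUnion fun b => Γ.neighborFinset (f b)
  have hF : #F < #(univ : Finset W) := calc
    #F ≤ Fintype.card S + G.degree w * k := by
      refine (card_union_le _ _).trans (add_le_add ?_ ?_)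
      · exact card_image_le.trans (Set.toFinset_card S).le
      · exact card_biUnion_le_card_mul _ _ _ fun b _ =>
          (card_neighborFinset_eq_degree Γ _).trans_le (hΓ _)
    _ < #(univ : Finset W) := hcard
  obtain ⟨y, -, hy⟩ := exists_mem_notMem_of_card_lt_card hF
  simp only [F, mem_union, mem_image, Set.mem_toFinset, mem_biUnion, mem_neighborFinset, not_or,
    not_exists, not_and] at hy
  refine supportPacksWith_update (y := y) hf hfG (fun hwS => ?_)
    (support_subset_insert_support_deleteIncidenceSet hw) ?_ ?_
  · exact (G.support_deleteIncidenceSet_subset w hwS).2 rfl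
  · rintro ⟨x, hx, rfl⟩
    exact hy.1 x hx rfl
  · exact fun b hb hyb => hy.2 b hb hyb.symm

lemma SupportPacksWith.of_deleteIncidenceSet_of_isolated_edge (hΓ : Γ.CliqueFree 3) {u v : V}
    (h : (G.deleteIncidenceSet u).SupportPacksWith Γ) (huv : G.Adj u v) (hu : G.degree u = 1)
    (hv : G.degree v = 1)
    (hcard : Fintype.card (G.deleteIncidenceSet u).support + 3 ≤ Fintype.card W) :
    G.SupportPacksWith Γ := by
  obtain ⟨f, hf, hfG⟩ := h
  let S := (G.deleteIncidenceSet u).support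
  have hu' : ∀ b, G.Adj u b → b = v := fun b hb =>
    (G.degree_eq_one_iff_existsUnique_adj.1 hu).unique hb huv
  have hv' : ∀ b, G.Adj v b → b = u := fun b hb =>
    (G.degree_eq_one_iff_existsUnique_adj.1 hv).unique hb huv.symm
  have huS : u ∉ S := fun h => (G.support_deleteIncidenceSet_subset u h).2 rfl
  have hvS : v ∉ S := by
    rintro ⟨b, hb⟩
    obtain ⟨hvb, -, hbu⟩ := deleteIncidenceSet_adj.1 hb
    exact hbu (hv' b hvb)
  obtain ⟨x, hx, y, hy, hxy, hΓxy⟩ := hΓ.exists_ne_not_adj (s := univ \ S.toFinset.image f) <| by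
    have := le_card_sdiff (S.toFinset.image f) univ
    have := (card_image_le (s := S.toFinset) (f := f)).trans (Set.toFinset_card S).le
    rw [card_univ] at *
    simp only [S] at *
    omega
  simp only [mem_sdiff, mem_univ, mem_image, Set.mem_toFinset, true_and, not_exists,
    not_and] at hx hy
  refine supportPacksWith_update (w := u) (S := insert v S) (f := Function.update f v x) (y := y)
    (hf.update hvS ?_) (fun a b hab => ?_) ?_ ?_ ?_ ?_
  · rintro ⟨a, ha, rfl⟩
    exact hx a ha rfl
  · rw [Function.update_of_ne, Function.update_of_ne]
    · exact hfG hab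
    · rintro rfl; exact hvS hab.mem_support_right
    · rintro rfl; exact hvS hab.mem_support_left
  · rintro (h | h)
    exacts [huv.ne h, huS h]
  · rintro a ⟨b, hab⟩
    obtain rfl | hau := eq_or_ne a u
    · exact Set.mem_insert a _
    obtain rfl | hav := eq_or_ne a v
    · exact Set.mem_insert_of_mem _ (Set.mem_insert a _)
    refine Set.mem_insert_of_mem _ (Set.mem_insert_of_mem _ ⟨b, ?_⟩)
    refine deleteIncidenceSet_adj.2 ⟨hab, hau, ?_⟩
    rintro rfl
    exact hav (hu' a hab.symm)
  · rintro ⟨a, ha | ha, hay⟩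
    · subst ha
      exact hxy (by rwa [Function.update_self] at hay)
    · rw [Function.update_of_ne (ne_of_mem_of_not_mem ha hvS)] at hay
      exact hy a ha hay
  · intro b hb
    rw [hu' b hb, Function.update_self]
    exact fun h => hΓxy h.symm

end Packing

theorem supportPacksWith_of_cliqueFree_three [Fintype V] [Fintype W] [Nonempty W]
    (hΓ : Γ.CliqueFree 3) (G : SimpleGraph V) (hG : 3 * G.edgeSet.ncard ≤ Fintype.card W) :
    G.SupportPacksWith Γ := by
  classical
  induction hm : G.edgeSet.ncard using Nat.strong_induction_on generalizing G with
  | _ m ih =>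
  have hE : #G.edgeFinset = m := by rw [← hm, Set.ncard_eq_toFinset_card']; rfl
  obtain rfl | hm0 := eq_or_ne m 0
  · rw [card_eq_zero, edgeFinset_eq_empty] at hE
    exact hE ▸ supportPacksWith_bot
  have ih' (w : V) (hw : 0 < G.degree w) : (G.deleteIncidenceSet w).SupportPacksWith Γ := by
    have hm' := hm ▸ ncard_edgeSet_deleteIncidenceSet (G := G) w
    exact ih _ (by omega) _ (by omega) hm'
  by_cases hiso : ∃ u v, G.Adj u v ∧ G.degree u = 1 ∧ G.degree v = 1
  · obtain ⟨u, v, huv, hu, hv⟩ := hiso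
    refine (ih' u (by omega)).of_deleteIncidenceSet_of_isolated_edge hΓ huv hu hv ?_
    have h2 := (G.deleteIncidenceSet u).card_support_le
    simp only [edgeFinset, ← Set.ncard_eq_toFinset_card', ncard_edgeSet_deleteIncidenceSet, hm,
      hu] at h2
    omega
  push Not at hiso
  by_cases hbig : ∃ z, Fintype.card G.support ≤ Γ.degree z
  · obtain ⟨z, hz⟩ := hbig
    exact supportPacksWith_of_card_support_le_degree hΓ hz
  push Not at hbig
  obtain ⟨w, hw, hmin⟩ := G.exists_mem_support_forall_degree_le <| by
    rwa [Ne, ← edgeFinset_eq_empty, ← card_eq_zero, hE]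
  refine (ih' w ((G.degree_pos_iff_mem_support w).2 hw)).of_deleteIncidenceSet
    (k := Fintype.card G.support - 1) (fun b => G.one_lt_degree_of_adj hiso hmin)
    (fun z => by have := hbig z; omega) ?_
  calc Fintype.card (G.deleteIncidenceSet w).support + G.degree w * (Fintype.card G.support - 1)
      ≤ (G.degree w + 1) * (Fintype.card G.support - 1) := by
        have := G.card_support_deleteIncidenceSet hw
        rw [add_one_mul]
        omega
    _ < 3 * #G.edgeFinset := G.degree_add_one_mul_card_support_sub_one_lt hiso hw hmin
    _ ≤ Fintype.card W := by omega

lemma SupportPacksWith.containsCopy_compl (h : G.SupportPacksWith Γ) (hG : ∀ v, ∃ w, G.Adj v w) :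
    Γᶜ.ContainsCopy G := by
  obtain ⟨f, hf, hfG⟩ := h
  rw [show G.support = Set.univ from Set.eq_univ_of_forall hG, Set.injOn_univ] at hf
  exact ⟨⟨f, fun hab => (compl_adj _ _ _).2 ⟨hf.ne hab.ne, hfG hab⟩⟩, hf⟩

end SimpleGraph

theorem stmt_6 {β : Type} [Fintype β] (G : SimpleGraph β) (m : ℕ)
    (hm : G.edgeSet.ncard = m) (hm1 : 1 ≤ m) (hiso : ∀ v, ∃ w, G.Adj v w) :
    ramseyNumber (⊤ : SimpleGraph (Fin 3)) G ≤ 3 * m := by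
  have hpos : 0 < 3 * m := by omega
  refine Nat.sInf_le ⟨hpos, fun Γ => ?_⟩
  by_cases hΓ : Γ.CliqueFree 3
  · have : Nonempty (Fin (3 * m)) := ⟨⟨0, hpos⟩⟩
    exact .inr ((supportPacksWith_of_cliqueFree_three hΓ G (by simp [hm])).containsCopy_compl hiso)
  · obtain ⟨e⟩ := (not_cliqueFree_iff_top_isContained 3).1 hΓ
    exact .inl ⟨e.toHom, e.injective⟩
end

section
/- Let s ≥ 3, let G be a graph with m edges, let n and a be positive integers, and let Γ be a graph on n vertices with the following two properties: (i) every subgraph of the complete graph K_n isomorphic to G contains at least a edges of Γ, and (ii) for every subgraph of K_n isomorphic to G, the maximum number of pairwise edge-disjoint s-cliques of Γ that each share at least one edge with that subgraph is strictly less than a / C(s,2), where C(s,2) = s(s−1)/2. Then r(K_s, G) > n; indeed, removing from Γ the edges of a maximal family of pairwise edge-disjoint s-cliques yields a graph with no K_s whose complement contains no copy of G. -/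
open SimpleGraph

/-! Every `s`-clique of `Γ` shares an edge with a member of the maximal edge-disjoint family `𝒞`,
so deleting the edges of `𝒞` destroys all `s`-cliques. In a copy of `G` in the complement of the
resulting graph, every one of the (by (i) at least `a`) edges lying in `Γ` was deleted, so it lies
in a clique of `𝒞` meeting the copy; each clique covers at most `C(s,2)` of them, and by (ii) there
are fewer than `a / C(s,2)` such cliques. So that graph witnesses `r(K_s, G) > n`, provided the
set whose infimum defines the Ramsey number is nonempty (else `sInf` is `0`): that is Ramsey's
theorem, proved by splitting a vertex's neighbours from its non-neighbours. -/

namespace SimpleGraph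

variable {α β V : Type*}

theorem containsCopy_iff_isContained (Γ : SimpleGraph V) (H : SimpleGraph β) :
    Γ.ContainsCopy H ↔ H ⊑ Γ :=
  ⟨fun ⟨f, hf⟩ ↦ ⟨⟨f, hf⟩⟩, fun ⟨f⟩ ↦ ⟨f.toHom, f.injective⟩⟩

theorem containsCopy_top_iff_not_cliqueFree (Γ : SimpleGraph V) (s : ℕ) :
    Γ.ContainsCopy (⊤ : SimpleGraph (Fin s)) ↔ ¬Γ.CliqueFree s := by
  rw [containsCopy_iff_isContained, not_cliqueFree_iff_top_isContained]

theorem IsNClique.containsCopy [Fintype β] {Γ : SimpleGraph V} {S : Finset V}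
    (hS : Γ.IsNClique (Fintype.card β) S) (H : SimpleGraph β) : Γ.ContainsCopy H := by
  have hK : (⊤ : SimpleGraph β) ⊑ Γ :=
    not_free.mp fun h ↦ cliqueFree_iff_top_free.mpr h S hS
  exact (containsCopy_iff_isContained Γ H).mpr ((IsContained.of_le le_top).trans hK)

theorem comap_compl_of_injective {f : V → α} (hf : Function.Injective f) (Γ : SimpleGraph α) :
    (Γ.comap f)ᶜ = Γᶜ.comap f := by
  ext x y
  simp [hf.ne_iff]

theorem exists_isNClique_succ_of_subset_filter_adj {Γ : SimpleGraph V} [DecidableRel Γ.Adj]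
    {A S : Finset V} {v : V} {k : ℕ} (hv : v ∈ A) (hS : S ⊆ A.filter (Γ.Adj v))
    (hk : Γ.IsNClique k S) : ∃ S' ⊆ A, Γ.IsNClique (k + 1) S' := by
  classical
  refine ⟨insert v S, Finset.insert_subset hv (hS.trans (Finset.filter_subset _ _)), ?_⟩
  exact hk.insert fun x hx ↦ (Finset.mem_filter.mp (hS hx)).2

theorem card_le_card_filter_adj_add_card_filter_compl_adj [DecidableEq V] (Γ : SimpleGraph V)
    [DecidableRel Γ.Adj] (A : Finset V) (v : V) :
    A.card ≤ (A.filter (Γ.Adj v)).card + (A.filter (Γᶜ.Adj v)).card + 1 := by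
  calc A.card ≤ (A.filter (Γ.Adj v) ∪ A.filter (Γᶜ.Adj v) ∪ {v}).card := by
        refine Finset.card_le_card fun x hx ↦ ?_
        by_cases hxv : x = v
        · simp [hxv]
        · by_cases hadj : Γ.Adj v x <;> simp [hx, hxv, hadj, Ne.symm hxv]
    _ ≤ _ := (Finset.card_union_le _ _).trans (by grw [Finset.card_union_le]; simp)

theorem exists_isNClique_or_isNClique_compl (s t : ℕ) :
    ∃ N : ℕ, ∀ {W : Type*} (Γ : SimpleGraph W) (A : Finset W), N ≤ A.card →
      (∃ S ⊆ A, Γ.IsNClique s S) ∨ ∃ S ⊆ A, Γᶜ.IsNClique t S := by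
  induction s generalizing t with
  | zero => exact ⟨0, fun Γ A _ ↦ .inl ⟨∅, Finset.empty_subset A, by simp⟩⟩
  | succ s ihs =>
  induction t with
  | zero => exact ⟨0, fun Γ A _ ↦ .inr ⟨∅, Finset.empty_subset A, by simp⟩⟩
  | succ t iht =>
  obtain ⟨N₁, hN₁⟩ := ihs (t + 1)
  obtain ⟨N₂, hN₂⟩ := iht
  refine ⟨N₁ + N₂ + 1, fun Γ A hA ↦ ?_⟩
  classical
  obtain ⟨v, hv⟩ : A.Nonempty := Finset.card_pos.mp (by omega)
  have hsplit := Γ.card_le_card_filter_adj_add_card_filter_compl_adj A v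
  by_cases hB : N₁ ≤ (A.filter (Γ.Adj v)).card
  · rcases hN₁ Γ _ hB with ⟨S, hSB, hS⟩ | ⟨S, hSB, hS⟩
    · exact .inl (exists_isNClique_succ_of_subset_filter_adj hv hSB hS)
    · exact .inr ⟨S, hSB.trans (Finset.filter_subset _ _), hS⟩
  · rcases hN₂ Γ (A.filter (Γᶜ.Adj v)) (by omega) with ⟨S, hSC, hS⟩ | ⟨S, hSC, hS⟩
    · exact .inl ⟨S, hSC.trans (Finset.filter_subset _ _), hS⟩
    · exact .inr (exists_isNClique_succ_of_subset_filter_adj hv hSC hS)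

end SimpleGraph

section RamseyNumber

variable {α β : Type*} {H : SimpleGraph α} {G : SimpleGraph β}

theorem RamseyProp.mono {k n : ℕ} (hk : RamseyProp k H G) (hkn : k ≤ n) : RamseyProp n H G := by
  intro Γ
  let e := Fin.castLEEmb hkn
  have hΓ : Γ.comap e ⊑ Γ := (Embedding.comap e Γ).isContained
  have hΓc : (Γ.comap e)ᶜ ⊑ Γᶜ := by
    rw [comap_compl_of_injective e.injective]
    exact (Embedding.comap e Γᶜ).isContained
  have := hk (Γ.comap e)
  simp only [containsCopy_iff_isContained] at this ⊢
  exact this.imp (·.trans hΓ) (·.trans hΓc)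

theorem exists_ramseyProp [Fintype α] [Fintype β] (H : SimpleGraph α) (G : SimpleGraph β) :
    ∃ N, RamseyProp N H G := by
  obtain ⟨N, hN⟩ := exists_isNClique_or_isNClique_compl (Fintype.card α) (Fintype.card β)
  refine ⟨N, fun Γ ↦ ?_⟩
  rcases hN Γ Finset.univ (by simp) with ⟨S, -, hS⟩ | ⟨S, -, hS⟩
  exacts [.inl (hS.containsCopy H), .inr (hS.containsCopy G)]

theorem lt_ramseyNumber_of_not_ramseyProp (hR : ∃ N, RamseyProp N H G) {n : ℕ}
    (hn : ¬RamseyProp n H G) : n < ramseyNumber H G := by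
  obtain ⟨N, hN⟩ := hR
  have hne : {k | 0 < k ∧ RamseyProp k H G}.Nonempty :=
    ⟨N + 1, N.succ_pos, hN.mono N.le_succ⟩
  by_contra! hle
  exact hn ((Nat.sInf_mem hne).2.mono hle)

end RamseyNumber

namespace SimpleGraph

variable {V β : Type*} {Γ : SimpleGraph V} {s : ℕ} {𝒞 : Finset (Finset V)}

theorem cliqueFree_deleteEdges_of_maximal [DecidableEq V] (hs : 2 ≤ s)
    (hmax : ∀ S : Finset V, Γ.IsNClique s S → S ∉ 𝒞 → ∃ T ∈ 𝒞, 2 ≤ (S ∩ T).card) :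
    (Γ.deleteEdges {e | ∃ S ∈ 𝒞, ∀ x ∈ e, x ∈ S}).CliqueFree s := by
  intro S hS
  obtain ⟨T, hT, hST⟩ : ∃ T ∈ 𝒞, 2 ≤ (S ∩ T).card := by
    by_cases hS𝒞 : S ∈ 𝒞
    · exact ⟨S, hS𝒞, by rwa [Finset.inter_self, hS.card_eq]⟩
    · exact hmax S (hS.mono (deleteEdges_le _)) hS𝒞
  obtain ⟨x, hx, y, hy, hxy⟩ := Finset.one_lt_card.mp (show 1 < (S ∩ T).card by omega)
  rw [Finset.mem_inter] at hx hy
  have hdel := (deleteEdges_adj ..).mp (hS.1 hx.1 hy.1 hxy)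
  exact hdel.2 ⟨T, hT, fun z hz ↦ by rcases Sym2.mem_iff.mp hz with rfl | rfl; exacts [hx.2, hy.2]⟩

theorem mem_of_mem_edgeSet_of_mem_edgeSet_compl_deleteEdges {D : Set (Sym2 V)} {e : Sym2 V}
    (he : e ∈ Γ.edgeSet) (he' : e ∈ (Γ.deleteEdges D)ᶜ.edgeSet) : e ∈ D := by
  induction e using Sym2.ind with
  | _ x y =>
  by_contra hD
  exact ((compl_adj _ _ _).mp he').2 ((deleteEdges_adj ..).mpr ⟨he, hD⟩)

theorem ncard_le_card_mul_choose_two {E : Set (Sym2 V)} {𝒦 : Finset (Finset V)}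
    (h𝒦 : ∀ S ∈ 𝒦, S.card = s) (hE : ∀ e ∈ E, ¬e.IsDiag ∧ ∃ S ∈ 𝒦, ∀ x ∈ e, x ∈ S) :
    E.ncard ≤ 𝒦.card * s.choose 2 := by
  classical
  let pairs : Finset V → Finset (Sym2 V) := fun S ↦ S.offDiag.image Sym2.mk.uncurry
  have hsub : E ⊆ ↑(𝒦.biUnion pairs) := by
    intro e he
    obtain ⟨hdiag, S, hS, heS⟩ := hE e he
    induction e using Sym2.ind with
    | _ x y =>
    refine Finset.mem_biUnion.mpr ⟨S, hS, Finset.mem_image.mpr ⟨(x, y), ?_, rfl⟩⟩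
    exact Finset.mem_offDiag.mpr
      ⟨heS x (Sym2.mem_mk_left x y), heS y (Sym2.mem_mk_right x y), hdiag⟩
  calc E.ncard ≤ (𝒦.biUnion pairs).card := by
        rw [← Set.ncard_coe_finset]; exact Set.ncard_le_ncard hsub (Finset.finite_toSet _)
    _ ≤ 𝒦.card * s.choose 2 := Finset.card_biUnion_le_card_mul _ _ _ fun S hS ↦ by
        rw [Sym2.card_image_offDiag, h𝒦 S hS]

theorem not_containsCopy_compl_deleteEdges [DecidableEq V] {G : SimpleGraph β} {a : ℕ}
    (hs : 2 ≤ s)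
    (h1 : ∀ f : β → V, Function.Injective f →
      a ≤ ((Sym2.map f '' G.edgeSet) ∩ Γ.edgeSet).ncard)
    (h2 : ∀ f : β → V, Function.Injective f →
      ∀ 𝒦 : Finset (Finset V),
        (∀ S ∈ 𝒦, Γ.IsNClique s S ∧ ∃ e ∈ Sym2.map f '' G.edgeSet, ∀ x ∈ e, x ∈ S) →
        (∀ S ∈ 𝒦, ∀ T ∈ 𝒦, S ≠ T → (S ∩ T).card ≤ 1) →
        (𝒦.card : ℝ) < (a : ℝ) / (s.choose 2))
    (hcl : ∀ S ∈ 𝒞, Γ.IsNClique s S) (hdisj : ∀ S ∈ 𝒞, ∀ T ∈ 𝒞, S ≠ T → (S ∩ T).card ≤ 1) :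
    ¬(Γ.deleteEdges {e | ∃ S ∈ 𝒞, ∀ x ∈ e, x ∈ S})ᶜ.ContainsCopy G := by
  rintro ⟨f, hf⟩
  classical
  let 𝒦 := 𝒞.filter fun S ↦ ∃ e ∈ Sym2.map f '' G.edgeSet, ∀ x ∈ e, x ∈ S
  have hcount : ((Sym2.map f '' G.edgeSet) ∩ Γ.edgeSet).ncard ≤ 𝒦.card * s.choose 2 := by
    refine ncard_le_card_mul_choose_two (fun S hS ↦ (hcl S (Finset.mem_filter.mp hS).1).card_eq) ?_
    rintro _ ⟨⟨e, he, rfl⟩, hΓ⟩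
    obtain ⟨S, hS, heS⟩ :=
      mem_of_mem_edgeSet_of_mem_edgeSet_compl_deleteEdges hΓ (f.map_mem_edgeSet he)
    exact ⟨not_isDiag_of_mem_edgeSet _ hΓ, S,
      Finset.mem_filter.mpr ⟨hS, _, ⟨e, he, rfl⟩, heS⟩, heS⟩
  have hsmall := h2 f hf 𝒦
    (fun S hS ↦ ⟨hcl S (Finset.mem_filter.mp hS).1, (Finset.mem_filter.mp hS).2⟩)
    (fun S hS T hT ↦ hdisj S (Finset.mem_filter.mp hS).1 T (Finset.mem_filter.mp hT).1)
  rw [lt_div_iff₀ (by exact_mod_cast Nat.choose_pos hs)] at hsmall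
  have hlt : 𝒦.card * s.choose 2 < a := by exact_mod_cast hsmall
  have := h1 f hf
  omega

theorem exists_maximal_edgeDisjoint_cliques [Fintype V] [DecidableEq V] (Γ : SimpleGraph V)
    (s : ℕ) :
    ∃ 𝒞 : Finset (Finset V), (∀ S ∈ 𝒞, Γ.IsNClique s S) ∧
      (∀ S ∈ 𝒞, ∀ T ∈ 𝒞, S ≠ T → (S ∩ T).card ≤ 1) ∧
      ∀ S : Finset V, Γ.IsNClique s S → S ∉ 𝒞 → ∃ T ∈ 𝒞, 2 ≤ (S ∩ T).card := by
  classical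
  let P : Finset (Finset V) → Prop := fun 𝒞 ↦
    (∀ S ∈ 𝒞, Γ.IsNClique s S) ∧ ∀ S ∈ 𝒞, ∀ T ∈ 𝒞, S ≠ T → (S ∩ T).card ≤ 1
  obtain ⟨𝒞, h𝒞, hmax⟩ :=
    (Finset.univ.filter P).exists_max_image Finset.card ⟨∅, by simp [P]⟩
  obtain ⟨hcl, hdisj⟩ := (Finset.mem_filter.mp h𝒞).2
  refine ⟨𝒞, hcl, hdisj, fun S hS hS𝒞 ↦ ?_⟩
  by_contra! hsmall
  have hins : P (insert S 𝒞) := by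
    refine ⟨fun T hT ↦ ?_, fun T hT U hU hTU ↦ ?_⟩
    · rcases Finset.mem_insert.mp hT with rfl | hT
      exacts [hS, hcl T hT]
    rcases Finset.mem_insert.mp hT with rfl | hT𝒞 <;>
      rcases Finset.mem_insert.mp hU with rfl | hU𝒞
    · exact absurd rfl hTU
    · exact Nat.le_of_lt_succ (hsmall U hU𝒞)
    · exact Finset.inter_comm T U ▸ Nat.le_of_lt_succ (hsmall T hT𝒞)
    · exact hdisj T hT𝒞 U hU𝒞 hTU
  have := hmax _ (Finset.mem_filter.mpr ⟨Finset.mem_univ _, hins⟩)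
  rw [Finset.card_insert_of_notMem hS𝒞] at this
  omega

end SimpleGraph

theorem stmt_8_general {β : Type} [Fintype β] (s : ℕ) (hs : 3 ≤ s)
    (G : SimpleGraph β)
    (n a : ℕ)
    (Γ : SimpleGraph (Fin n))
    -- (i) every subgraph of `K_n` isomorphic to `G` contains at least `a` edges of `Γ`
    (h1 : ∀ f : β → Fin n, Function.Injective f →
      a ≤ ((Sym2.map f '' G.edgeSet) ∩ Γ.edgeSet).ncard)
    -- (ii) for every copy of `G`, every family of pairwise edge-disjoint `s`-cliques of `Γ`,
    -- each sharing an edge with the copy, has fewer than `a / C(s,2)` members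
    (h2 : ∀ f : β → Fin n, Function.Injective f →
      ∀ 𝒞 : Finset (Finset (Fin n)),
        (∀ S ∈ 𝒞, Γ.IsNClique s S ∧ ∃ e ∈ Sym2.map f '' G.edgeSet, ∀ x ∈ e, x ∈ S) →
        (∀ S ∈ 𝒞, ∀ T ∈ 𝒞, S ≠ T → (S ∩ T).card ≤ 1) →
        (𝒞.card : ℝ) < (a : ℝ) / (s.choose 2)) :
    n < ramseyNumber (⊤ : SimpleGraph (Fin s)) G ∧
    -- removing a maximal family of pairwise edge-disjoint `s`-cliques from `Γ` yields a
    -- `K_s`-free graph whose complement contains no copy of `G`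
    ∀ 𝒞 : Finset (Finset (Fin n)),
      (∀ S ∈ 𝒞, Γ.IsNClique s S) →
      (∀ S ∈ 𝒞, ∀ T ∈ 𝒞, S ≠ T → (S ∩ T).card ≤ 1) →
      (∀ S : Finset (Fin n), Γ.IsNClique s S → S ∉ 𝒞 → ∃ T ∈ 𝒞, 2 ≤ (S ∩ T).card) →
      (Γ.deleteEdges {e | ∃ S ∈ 𝒞, ∀ x ∈ e, x ∈ S}).CliqueFree s ∧
      ¬ (Γ.deleteEdges {e | ∃ S ∈ 𝒞, ∀ x ∈ e, x ∈ S})ᶜ.ContainsCopy G := by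
  have hs₂ : 2 ≤ s := by omega
  refine ⟨?_, fun _ hcl hdisj hmax ↦ ⟨cliqueFree_deleteEdges_of_maximal hs₂ hmax,
    not_containsCopy_compl_deleteEdges hs₂ h1 h2 hcl hdisj⟩⟩
  obtain ⟨𝒞, hcl, hdisj, hmax⟩ := exists_maximal_edgeDisjoint_cliques Γ s
  refine lt_ramseyNumber_of_not_ramseyProp (exists_ramseyProp _ G) fun hR ↦ ?_
  rcases hR (Γ.deleteEdges {e | ∃ S ∈ 𝒞, ∀ x ∈ e, x ∈ S}) with hK | hG
  · exact (containsCopy_top_iff_not_cliqueFree _ s).mp hK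
      (cliqueFree_deleteEdges_of_maximal hs₂ hmax)
  · exact not_containsCopy_compl_deleteEdges hs₂ h1 h2 hcl hdisj hG

theorem stmt_8 {β : Type} [Fintype β] (s : ℕ) (hs : 3 ≤ s)
    (G : SimpleGraph β) (m : ℕ) (hm : G.edgeSet.ncard = m)
    (n a : ℕ) (hn : 0 < n) (ha : 0 < a)
    (Γ : SimpleGraph (Fin n))
    -- (i) every subgraph of `K_n` isomorphic to `G` contains at least `a` edges of `Γ`
    (h1 : ∀ f : β → Fin n, Function.Injective f →
      a ≤ ((Sym2.map f '' G.edgeSet) ∩ Γ.edgeSet).ncard)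
    -- (ii) for every copy of `G`, every family of pairwise edge-disjoint `s`-cliques of `Γ`,
    -- each sharing an edge with the copy, has fewer than `a / C(s,2)` members
    (h2 : ∀ f : β → Fin n, Function.Injective f →
      ∀ 𝒞 : Finset (Finset (Fin n)),
        (∀ S ∈ 𝒞, Γ.IsNClique s S ∧ ∃ e ∈ Sym2.map f '' G.edgeSet, ∀ x ∈ e, x ∈ S) →
        (∀ S ∈ 𝒞, ∀ T ∈ 𝒞, S ≠ T → (S ∩ T).card ≤ 1) →
        (𝒞.card : ℝ) < (a : ℝ) / (s.choose 2)) :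
    n < ramseyNumber (⊤ : SimpleGraph (Fin s)) G ∧
    -- removing a maximal family of pairwise edge-disjoint `s`-cliques from `Γ` yields a
    -- `K_s`-free graph whose complement contains no copy of `G`
    ∀ 𝒞 : Finset (Finset (Fin n)),
      (∀ S ∈ 𝒞, Γ.IsNClique s S) →
      (∀ S ∈ 𝒞, ∀ T ∈ 𝒞, S ≠ T → (S ∩ T).card ≤ 1) →
      (∀ S : Finset (Fin n), Γ.IsNClique s S → S ∉ 𝒞 → ∃ T ∈ 𝒞, 2 ≤ (S ∩ T).card) →
      (Γ.deleteEdges {e | ∃ S ∈ 𝒞, ∀ x ∈ e, x ∈ S}).CliqueFree s ∧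
      ¬ (Γ.deleteEdges {e | ∃ S ∈ 𝒞, ∀ x ∈ e, x ∈ S})ᶜ.ContainsCopy G :=
  stmt_8_general s hs G n a Γ h1 h2
end

section
/- For every graph H and all positive integers t and k, the Ramsey number of H versus the disjoint union of t copies of the complete graph K_k satisfies r(H, t·K_k) ≤ r(H, K_k) + (t − 1)·k. -/
open SimpleGraph

/-- `multiClique t k` is `t·K_k`, the disjoint union of `t` copies of the complete
graph on `k` vertices. -/
def multiClique (t k : ℕ) : SimpleGraph (Fin t × Fin k) where
  Adj u v := u.1 = v.1 ∧ u.2 ≠ v.2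
  symm := ⟨fun u v h => ⟨h.1.symm, h.2.symm⟩⟩
  loopless := ⟨fun u h => h.2 rfl⟩

/-!
Induction on `t`. Suppose every graph on `n ≥ r(H, K_k)` vertices contains `H` or has a `t·K_k` in
its complement, and take a graph on `n + k` vertices without `H`. Its complement contains a `K_k`;
the remaining `n` vertices carry a `t·K_k` of the complement, disjoint from that `K_k`, and the two
together form a `(t + 1)·K_k`, since `t·K_k` has no edges between distinct cliques.
-/

open Function

variable {α β γ V W : Type*}

namespace SimpleGraph

theorem containsCopy_iff_isContained_s9 {G : SimpleGraph V} {H : SimpleGraph W} :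
    G.ContainsCopy H ↔ H ⊑ G :=
  ⟨fun ⟨f, hf⟩ => ⟨⟨f, hf⟩⟩, fun ⟨c⟩ => ⟨c.toHom, c.injective⟩⟩

theorem compl_comap {f : V → W} (hf : Injective f) (G : SimpleGraph W) :
    (G.comap f)ᶜ = Gᶜ.comap f := by
  ext a b
  simp [hf.ne_iff]

theorem compl_induce (s : Set V) (G : SimpleGraph V) : (G.induce s)ᶜ = Gᶜ.induce s :=
  compl_comap Subtype.val_injective G

def Copy.sumElim {A : SimpleGraph α} {B : SimpleGraph β} {G : SimpleGraph V}
    (f : Copy A G) (g : Copy B G) (h : ∀ a b, f a ≠ g b) : Copy (A ⊕g B) G where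
  toHom := ⟨Sum.elim f g, by
    rintro (a | b) (a' | b') hab
    · exact f.toHom.map_adj hab
    · simp at hab
    · simp at hab
    · exact g.toHom.map_adj hab⟩
  injective' := f.injective.sumElim g.injective h

end SimpleGraph

open SimpleGraph

theorem top_isContained_multiClique {t : ℕ} (ht : 0 < t) (k : ℕ) :
    (⊤ : SimpleGraph (Fin k)) ⊑ multiClique t k :=
  ⟨⟨⟨fun j => (⟨0, ht⟩, j), fun hj => ⟨rfl, hj⟩⟩, fun _ _ h => (Prod.ext_iff.1 h).2⟩⟩

theorem multiClique_one_isContained_top (k : ℕ) :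
    multiClique 1 k ⊑ (⊤ : SimpleGraph (Fin k)) :=
  ⟨⟨⟨Prod.snd, fun h => h.2⟩, fun _ _ h => Prod.ext (Subsingleton.elim _ _) h⟩⟩

theorem multiClique_succ_isContained_sum (t k : ℕ) :
    multiClique (t + 1) k ⊑ (⊤ : SimpleGraph (Fin k)) ⊕g multiClique t k := by
  refine ⟨⟨⟨fun p => Fin.cases (.inl p.2) (fun i => .inr (i, p.2)) p.1, ?_⟩, ?_⟩⟩
  · rintro ⟨i, j⟩ ⟨i', j'⟩ ⟨rfl, hj⟩
    cases i using Fin.cases <;> simp_all [multiClique]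
  · rintro ⟨i, j⟩ ⟨i', j'⟩ h
    cases i using Fin.cases <;> cases i' using Fin.cases <;> simp_all

namespace RamseyProp

variable {n r t k : ℕ} {H : SimpleGraph α} {G : SimpleGraph β}

theorem of_le_card (h : RamseyProp n H G) [Fintype V] (hV : n ≤ Fintype.card V)
    (Γ : SimpleGraph V) : H ⊑ Γ ∨ G ⊑ Γᶜ := by
  obtain ⟨e⟩ := Embedding.nonempty_of_card_le (α := Fin n) (β := V) (by simpa using hV)
  rcases h (Γ.comap e) with hH | hG
  · exact .inl ((containsCopy_iff_isContained_s9.1 hH).trans (Embedding.comap e Γ).isContained)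
  · rw [containsCopy_iff_isContained_s9, compl_comap e.injective] at hG
    exact .inr (hG.trans (Embedding.comap e Γᶜ).isContained)

theorem mono_right {G' : SimpleGraph γ} (h : RamseyProp n H G) (hG : G' ⊑ G) :
    RamseyProp n H G' := fun Γ =>
  (h Γ).imp id fun hG' =>
    containsCopy_iff_isContained_s9.2 (hG.trans (containsCopy_iff_isContained_s9.1 hG'))

theorem multiClique_succ (hr : RamseyProp r H (⊤ : SimpleGraph (Fin k)))
    (hn : RamseyProp n H (multiClique t k)) (hrn : r ≤ n) :
    RamseyProp (n + k) H (multiClique (t + 1) k) := by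
  intro Γ
  simp only [containsCopy_iff_isContained_s9]
  rcases hr.of_le_card (by simp; omega) Γ with hH | hK
  · exact .inl hH
  obtain ⟨c⟩ := hK
  set s := (Set.range c)ᶜ
  have hs : n ≤ Fintype.card s := by
    rw [Fintype.card_compl_set, Set.card_range_of_injective (f := c) c.injective]
    simp
  rcases hn.of_le_card hs (Γ.induce s) with hH | hT
  · exact .inl (hH.trans ⟨Copy.induce Γ s⟩)
  obtain ⟨d⟩ := hT
  rw [compl_induce] at d
  let d' := (Copy.induce Γᶜ s).comp d
  refine .inr ((multiClique_succ_isContained_sum t k).trans ⟨c.sumElim d' ?_⟩)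
  intro a b hab
  exact (d b).2 ⟨a, hab⟩

theorem multiClique_add (hr : RamseyProp r H (⊤ : SimpleGraph (Fin k))) (u : ℕ) :
    RamseyProp (r + u * k) H (multiClique (u + 1) k) := by
  induction u with
  | zero => simpa using hr.mono_right (multiClique_one_isContained_top k)
  | succ u ih => simpa [add_mul, add_assoc] using hr.multiClique_succ ih (by omega)

end RamseyProp

theorem ramseyNumber_le_add {H : SimpleGraph α} {G : SimpleGraph β} {G' : SimpleGraph γ} {m : ℕ}
    (hG : ∀ n, RamseyProp n H G' → RamseyProp n H G)
    (h : ∀ n, 0 < n → RamseyProp n H G → RamseyProp (n + m) H G') :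
    ramseyNumber H G' ≤ ramseyNumber H G + m := by
  -- `sInf ∅ = 0` is the case where `r(H, G)` does not exist.
  rcases Set.eq_empty_or_nonempty {n | 0 < n ∧ RamseyProp n H G} with hS | hS
  · have : {n | 0 < n ∧ RamseyProp n H G'} = ∅ :=
      Set.eq_empty_of_forall_notMem fun n hn => hS.subset ⟨hn.1, hG n hn.2⟩
    simp [ramseyNumber, this]
  · obtain ⟨hpos, hr⟩ := Nat.sInf_mem hS
    exact Nat.sInf_le ⟨Nat.add_pos_left hpos m, h _ hpos hr⟩

theorem stmt_9_general {α : Type} (H : SimpleGraph α) (t k : ℕ)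
    (ht : 0 < t) :
    ramseyNumber H (multiClique t k) ≤
      ramseyNumber H (⊤ : SimpleGraph (Fin k)) + (t - 1) * k := by
  refine ramseyNumber_le_add (fun n hn => hn.mono_right (top_isContained_multiClique ht k))
    fun r _ hr => ?_
  obtain ⟨u, rfl⟩ : ∃ u, t = u + 1 := ⟨t - 1, by omega⟩
  simpa using hr.multiClique_add u

theorem stmt_9 {α : Type} [Fintype α] (H : SimpleGraph α) (t k : ℕ)
    (ht : 0 < t) (hk : 0 < k) :
    ramseyNumber H (multiClique t k) ≤
      ramseyNumber H (⊤ : SimpleGraph (Fin k)) + (t - 1) * k :=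
  stmt_9_general H t k ht
end

section
/- Let G be a graph with m ≥ 1 edges, N vertices, and no isolated vertices. Let Γ be a graph on n vertices whose maximum degree is at most d, and suppose the complement of Γ contains a clique of size k ≥ 1. If n ≥ N + d·⌊2m/(k+1)⌋, then the complement of Γ contains a copy of G. -/
open SimpleGraph

/-!
Order the vertices of `G` by decreasing degree. The `k` vertices of largest degree are sent
injectively into the clique of `Γᶜ`. Every other vertex `v` has degree at most `2m/(k+1)`:
it and those `k` vertices, each of degree at least `deg v`, contribute at most `2m` to the
degree sum.
The remaining vertices are then embedded greedily: when `v` is placed, at most `N - 1` images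
are already used and at most `d · deg v` vertices are `Γ`-neighbours of images of neighbours
of `v`, which leaves a free vertex as long as `n ≥ N + d · ⌊2m/(k+1)⌋`.
-/

open Finset

theorem Finset.exists_card_eq_forall_le {ι α : Type*} [Fintype ι] [DecidableEq ι]
    [LinearOrder α] (f : ι → α) {j : ℕ} (hj : j ≤ Fintype.card ι) :
    ∃ K : Finset ι, #K = j ∧ ∀ u ∈ K, ∀ v ∉ K, f v ≤ f u := by
  induction j with
  | zero => exact ⟨∅, card_empty, by simp⟩
  | succ j ih =>
    obtain ⟨K, hKcard, hK⟩ := ih (by omega)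
    have hne : Kᶜ.Nonempty := by
      rw [← card_pos, card_compl]
      omega
    obtain ⟨x, hxK, hxmax⟩ := exists_max_image Kᶜ f hne
    rw [mem_compl] at hxK
    refine ⟨insert x K, by rw [card_insert_of_notMem hxK, hKcard], fun u hu v hv => ?_⟩
    rw [mem_insert, not_or] at hv
    rcases mem_insert.1 hu with rfl | hu
    · exact hxmax v (mem_compl.2 hv.2)
    · exact hK u hu v hv.2

theorem Finset.card_add_one_mul_le_sum {ι : Type*} [Fintype ι] [DecidableEq ι] {f : ι → ℕ}
    {K : Finset ι} {v : ι} (hv : v ∉ K) (hK : ∀ u ∈ K, f v ≤ f u) :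
    (#K + 1) * f v ≤ ∑ x, f x :=
  calc (#K + 1) * f v = #(insert v K) • f v := by rw [card_insert_of_notMem hv, smul_eq_mul]
    _ ≤ ∑ x ∈ insert v K, f x :=
      card_nsmul_le_sum _ _ _ (forall_mem_insert _ _ _ |>.2 ⟨le_rfl, hK⟩)
    _ ≤ ∑ x, f x := sum_le_sum_of_subset (subset_univ _)

namespace SimpleGraph

variable {β V : Type*}

def IsPartialCopy (G : SimpleGraph β) (H : SimpleGraph V) (s : Finset β) (f : β → V) : Prop :=
  Set.InjOn f s ∧ ∀ u ∈ s, ∀ v ∈ s, G.Adj u v → H.Adj (f u) (f v)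

variable {G : SimpleGraph β} {H : SimpleGraph V}

theorem isPartialCopy_empty (f : β → V) : G.IsPartialCopy H ∅ f := by
  simp [IsPartialCopy]

theorem IsPartialCopy.containsCopy [Fintype β] {f : β → V} (hf : G.IsPartialCopy H univ f) :
    H.ContainsCopy G :=
  ⟨⟨f, fun huv => hf.2 _ (mem_univ _) _ (mem_univ _) huv⟩,
    fun _ _ h => hf.1 (by simp) (by simp) h⟩

theorem IsPartialCopy.update [DecidableEq β] {s : Finset β} {f : β → V} {v : β} {c : V}
    (hf : G.IsPartialCopy H s f) (hv : v ∉ s) (hc : ∀ u ∈ s, f u ≠ c)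
    (hadj : ∀ u ∈ s, G.Adj u v → H.Adj (f u) c) :
    G.IsPartialCopy H (insert v s) (Function.update f v c) := by
  have hfs : ∀ u ∈ s, Function.update f v c u = f u := fun u hu =>
    Function.update_of_ne (ne_of_mem_of_not_mem hu hv) c f
  refine ⟨?_, fun u hu w hw huw => ?_⟩
  · rw [coe_insert, Set.injOn_insert (mem_coe.not.2 hv), Function.update_self]
    refine ⟨hf.1.congr fun u hu => (hfs u hu).symm, ?_⟩
    rintro ⟨u, hu, hcu⟩
    exact hc u hu (hfs u hu ▸ hcu)
  rcases mem_insert.1 hu with rfl | hu' <;> rcases mem_insert.1 hw with rfl | hw'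
  · exact absurd huw G.irrefl
  · rw [Function.update_self, hfs w hw']
    exact (hadj w hw' huw.symm).symm
  · rw [Function.update_self, hfs u hu']
    exact hadj u hu' huw
  · rw [hfs u hu', hfs w hw']
    exact hf.2 u hu' w hw' huw

theorem exists_isPartialCopy_of_isClique [Nonempty V] [DecidableEq β] [DecidableEq V]
    {S : Finset V} (hS : H.IsClique (S : Set V)) {K : Finset β} (hK : #K ≤ #S) :
    ∃ f, G.IsPartialCopy H K f := by
  suffices ∃ f, G.IsPartialCopy H K f ∧ ∀ u ∈ K, f u ∈ S from this.imp fun _ => And.left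
  refine Finset.induction_on' K ⟨Classical.arbitrary _, isPartialCopy_empty _, by simp⟩ ?_
  rintro a s ha hs has ⟨f, hf, hfS⟩
  have hlt : #(s.image f) < #S :=
    card_image_le.trans_lt ((card_lt_card ⟨hs, fun h => has (h ha)⟩).trans_le hK)
  obtain ⟨c, hcS, hcf⟩ := exists_mem_notMem_of_card_lt_card hlt
  have hc : ∀ u ∈ s, f u ≠ c := fun u hu hu' => hcf (mem_image.2 ⟨u, hu, hu'⟩)
  refine ⟨_, hf.update has hc fun u hu _ => hS (hfS u hu) hcS (hc u hu), ?_⟩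
  rw [forall_mem_insert, Function.update_self]
  refine ⟨hcS, fun u hu => ?_⟩
  rw [Function.update_of_ne (ne_of_mem_of_not_mem hu has)]
  exact hfS u hu

theorem IsPartialCopy.exists_insert_compl [Fintype V] [DecidableEq β] [DecidableEq V]
    {Γ : SimpleGraph V} [DecidableRel Γ.Adj] {s : Finset β} {f : β → V} {v : β}
    [Fintype (G.neighborSet v)] {d : ℕ} (hf : G.IsPartialCopy Γᶜ s f) (hv : v ∉ s)
    (hd : ∀ x, Γ.degree x ≤ d) (hcard : #s + G.degree v * d < Fintype.card V) :
    ∃ c, G.IsPartialCopy Γᶜ (insert v s) (Function.update f v c) := by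
  classical
  set A := s.filter (G.Adj · v)
  have hA : #A ≤ G.degree v := by
    rw [← card_neighborFinset_eq_degree]
    exact card_le_card fun u hu => (mem_neighborFinset _ _ _).2 (mem_filter.1 hu).2.symm
  have hforbidden :
      #(s.image f ∪ A.biUnion fun u => Γ.neighborFinset (f u)) < #(univ : Finset V) :=
    calc _ ≤ #s + #A * d := by
          grw [card_union_le, card_image_le, card_biUnion_le, sum_le_card_nsmul A _ d
            fun u _ => (card_neighborFinset_eq_degree Γ (f u)).trans_le (hd (f u)), smul_eq_mul]
      _ < _ := by
          rw [card_univ]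
          grw [hA]
          exact hcard
  obtain ⟨c, -, hc⟩ := exists_mem_notMem_of_card_lt_card hforbidden
  rw [mem_union, not_or, mem_image, mem_biUnion] at hc
  refine ⟨c, hf.update hv (fun u hu hu' => hc.1 ⟨u, hu, hu'⟩) fun u hu huv => ?_⟩
  refine (compl_adj _ _ _).2 ⟨fun hu' => hc.1 ⟨u, hu, hu'⟩, fun hΓ => hc.2 ⟨u, ?_, ?_⟩⟩
  · exact mem_filter.2 ⟨hu, huv⟩
  · exact (mem_neighborFinset _ _ _).2 hΓ

theorem IsPartialCopy.containsCopy_compl [Fintype β] [Fintype V] [DecidableEq β] [DecidableEq V]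
    [DecidableRel G.Adj] {Γ : SimpleGraph V} [DecidableRel Γ.Adj] {K : Finset β} {f : β → V}
    {d D : ℕ} (hK : G.IsPartialCopy Γᶜ K f) (hd : ∀ x, Γ.degree x ≤ d)
    (hD : ∀ v ∉ K, G.degree v ≤ D) (hn : Fintype.card β + d * D ≤ Fintype.card V) :
    Γᶜ.ContainsCopy G := by
  suffices ∃ g, G.IsPartialCopy Γᶜ (K ∪ Kᶜ) g by
    obtain ⟨g, hg⟩ := this
    exact (union_compl K ▸ hg).containsCopy
  refine Finset.induction_on' Kᶜ ⟨f, by rwa [union_empty]⟩ ?_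
  rintro a t ha - hat ⟨g, hg⟩
  have haKt : a ∉ K ∪ t := by
    rw [mem_union, not_or]
    exact ⟨mem_compl.1 ha, hat⟩
  have hcard : #(K ∪ t) + G.degree a * d < Fintype.card V := by
    have := card_lt_univ_of_notMem haKt
    grw [hD a (mem_compl.1 ha)]
    lia
  obtain ⟨c, hc⟩ := hg.exists_insert_compl haKt hd hcard
  exact ⟨_, union_insert a K t ▸ hc⟩

end SimpleGraph

theorem stmt_10_general {β : Type} [Fintype β] (G : SimpleGraph β) (m N n d k : ℕ)
    (hm : G.edgeSet.ncard = m) (hN : Fintype.card β = N)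
    (Γ : SimpleGraph (Fin n)) [DecidableRel Γ.Adj]
    (hd : ∀ v, Γ.degree v ≤ d)
    (hclique : ∃ S : Finset (Fin n), Γᶜ.IsNClique k S)
    (hn : N + d * (2 * m / (k + 1)) ≤ n) :
    Γᶜ.ContainsCopy G := by
  classical
  subst hN
  rcases isEmpty_or_nonempty β with hβ | hβ
  · exact ⟨⟨isEmptyElim, fun {a} => isEmptyElim a⟩, fun a => isEmptyElim a⟩
  have : Nonempty (Fin n) := ⟨⟨0, by have := Fintype.card_pos (α := β); omega⟩⟩
  obtain ⟨S, hS⟩ := hclique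
  obtain ⟨K, hKcard, hKtop⟩ :=
    exists_card_eq_forall_le (fun v => G.degree v) (min_le_right k _)
  obtain ⟨f, hf⟩ := exists_isPartialCopy_of_isClique (G := G) hS.isClique (K := K)
    (by rw [hS.card_eq, hKcard]; exact min_le_left k _)
  refine hf.containsCopy_compl hd (fun v hv => ?_) (by simpa using hn)
  have hKk : #K = k := by
    have := card_lt_univ_of_notMem hv
    omega
  rw [Nat.le_div_iff_mul_le k.succ_pos, mul_comm, ← hKk, ← hm, ← coe_edgeFinset,
    Set.ncard_coe_finset, ← sum_degrees_eq_twice_card_edges]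
  exact card_add_one_mul_le_sum (f := fun v => G.degree v) hv fun u hu => hKtop u hu v hv

theorem stmt_10 {β : Type} [Fintype β] (G : SimpleGraph β) (m N n d k : ℕ)
    (hm : G.edgeSet.ncard = m) (hm1 : 1 ≤ m) (hN : Fintype.card β = N)
    (hiso : ∀ v, ∃ w, G.Adj v w)
    (Γ : SimpleGraph (Fin n)) [DecidableRel Γ.Adj]
    (hd : ∀ v, Γ.degree v ≤ d)
    (hk : 1 ≤ k) (hclique : ∃ S : Finset (Fin n), Γᶜ.IsNClique k S)
    (hn : N + d * (2 * m / (k + 1)) ≤ n) :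
    Γᶜ.ContainsCopy G :=
  stmt_10_general G m N n d k hm hN Γ hd hclique hn
end

section
/- For all integers q ≥ p ≥ 2 there exists a constant C > 0 (depending only on p and q) such that for every k ≥ 2, the Ramsey number satisfies r(K_{p,q}, K_k) ≤ C · k^p. -/
open SimpleGraph

section Helpers
open Finset
-- greedy independent set
lemma greedy_indep {V : Type*} [Fintype V] [DecidableEq V] (G : SimpleGraph V)
    [DecidableRel G.Adj] (d : ℕ) :
    ∀ (k : ℕ) (S : Finset V), (∀ v ∈ S, (G.neighborFinset v ∩ S).card ≤ d) →
    k * (d + 1) ≤ S.card →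
    ∃ I : Finset V, I ⊆ S ∧ I.card = k ∧ ∀ x ∈ I, ∀ y ∈ I, ¬ G.Adj x y := by
  intro k
  induction k with
  | zero => intro S _ _; exact ⟨∅, by simp⟩
  | succ k ih =>
    intro S hdeg hcard
    have hexp : (k + 1) * (d + 1) = k * (d + 1) + (d + 1) := by ring
    have hS : S.Nonempty := by
      rw [← Finset.card_pos]; omega
    obtain ⟨v, hv⟩ := hS
    set S' := (S.erase v) \ G.neighborFinset v with hS'def
    have hsub : S' ⊆ S := (Finset.sdiff_subset).trans (Finset.erase_subset _ _)
    have hcard' : k * (d + 1) ≤ S'.card := by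
      have h1 : S' = (S.erase v) \ (G.neighborFinset v ∩ S) := by
        ext x
        simp only [hS'def, Finset.mem_sdiff, Finset.mem_erase, Finset.mem_inter]
        tauto
      have h2 : (S.erase v).card - (G.neighborFinset v ∩ S).card ≤ S'.card := by
        rw [h1]; exact Finset.le_card_sdiff _ _
      have h3 := hdeg v hv
      have h4 : (S.erase v).card = S.card - 1 := Finset.card_erase_of_mem hv
      omega
    obtain ⟨I, hIsub, hIcard, hIind⟩ := ih S'
      (fun u hu => le_trans
        (Finset.card_le_card (Finset.inter_subset_inter (Finset.Subset.refl _) hsub)) (hdeg u (hsub hu)))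
      hcard'
    have hvS' : v ∉ S' := by simp [hS'def]
    have hvI : v ∉ I := fun h => hvS' (hIsub h)
    refine ⟨insert v I, ?_, ?_, ?_⟩
    · exact Finset.insert_subset hv (hIsub.trans hsub)
    · rw [Finset.card_insert_of_notMem hvI, hIcard]
    · have hnb : ∀ z ∈ I, ¬ G.Adj v z := by
        intro z hz hadj
        have := hIsub hz
        rw [hS'def, Finset.mem_sdiff] at this
        exact this.2 (by rwa [SimpleGraph.mem_neighborFinset])
      intro x hx y hy hadj
      rcases Finset.mem_insert.mp hx with hx' | hx' <;>
        rcases Finset.mem_insert.mp hy with hy' | hy' <;> subst_vars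
      · exact G.irrefl hadj
      · exact hnb y hy' hadj
      · exact hnb x hx' hadj.symm
      · exact hIind x hx' y hy' hadj

-- independent set gives copy of K_k in complement
lemma indep_copy {n k : ℕ} (Γ : SimpleGraph (Fin n)) (I : Finset (Fin n)) (hI : I.card = k)
    (hind : ∀ x ∈ I, ∀ y ∈ I, ¬ Γ.Adj x y) :
    Γᶜ.ContainsCopy (⊤ : SimpleGraph (Fin k)) := by
  have hinj := (I.orderEmbOfFin hI).injective
  refine ⟨⟨fun i => I.orderEmbOfFin hI i, ?_⟩, hinj⟩
  intro a b hab
  rw [top_adj] at hab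
  rw [SimpleGraph.compl_adj]
  exact ⟨fun h => hab (hinj h),
    hind _ (I.orderEmbOfFin_mem hI a) _ (I.orderEmbOfFin_mem hI b)⟩

-- common neighborhood bound
lemma common_bound {n p q : ℕ} (hq : 1 ≤ q) (Γ : SimpleGraph (Fin n)) [DecidableRel Γ.Adj]
    (h : ¬ Γ.ContainsCopy (completeBipartiteGraph (Fin p) (Fin q)))
    (S : Finset (Fin n)) (hS : S.card = p) :
    (Finset.univ.filter (fun v => S ⊆ Γ.neighborFinset v)).card ≤ q - 1 := by
  by_contra hc
  push_neg at hc
  set T := Finset.univ.filter (fun v => S ⊆ Γ.neighborFinset v) with hT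
  have hq' : q ≤ T.card := by omega
  obtain ⟨T', hT'sub, hT'⟩ := Finset.exists_subset_card_eq hq'
  have hmemT : ∀ j, T'.orderEmbOfFin hT' j ∈ T := fun j => hT'sub (T'.orderEmbOfFin_mem hT' j)
  have hadjST : ∀ (i : Fin p) (j : Fin q), Γ.Adj (S.orderEmbOfFin hS i) (T'.orderEmbOfFin hT' j) := by
    intro i j
    have := hmemT j
    rw [hT, Finset.mem_filter] at this
    have := this.2 (S.orderEmbOfFin_mem hS i)
    rw [SimpleGraph.mem_neighborFinset] at this
    exact this.symm
  have hne : ∀ (i : Fin p) (j : Fin q), S.orderEmbOfFin hS i ≠ T'.orderEmbOfFin hT' j :=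
    fun i j he => Γ.irrefl (he ▸ hadjST i j)
  apply h
  refine ⟨⟨Sum.elim (fun i => S.orderEmbOfFin hS i) (fun j => T'.orderEmbOfFin hT' j), ?_⟩, ?_⟩
  · rintro (a | a) (b | b) hab
    · simp at hab
    · exact hadjST a b
    · exact (hadjST b a).symm
    · simp at hab
  · rintro (a | a) (b | b) hab
    · exact congrArg Sum.inl ((S.orderEmbOfFin hS).injective hab)
    · exact absurd hab (hne a b)
    · exact absurd hab.symm (hne b a)
    · exact congrArg Sum.inr ((T'.orderEmbOfFin hT').injective hab)

-- double counting
lemma double_count {n p : ℕ} (Γ : SimpleGraph (Fin n)) [DecidableRel Γ.Adj] (b : ℕ)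
    (h : ∀ S : Finset (Fin n), S.card = p →
      (Finset.univ.filter (fun v => S ⊆ Γ.neighborFinset v)).card ≤ b) :
    ∑ v, (Γ.degree v).choose p ≤ (n.choose p) * b := by
  have key : ∀ v : Fin n, (Γ.degree v).choose p =
      ∑ S ∈ Finset.univ.powersetCard p, if S ⊆ Γ.neighborFinset v then 1 else 0 := by
    intro v
    rw [← Finset.card_filter]
    have he : (Finset.univ.powersetCard p).filter (fun S => S ⊆ Γ.neighborFinset v)
        = (Γ.neighborFinset v).powersetCard p := by
      ext S
      simp only [Finset.mem_filter, Finset.mem_powersetCard, Finset.subset_univ, true_and]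
      tauto
    rw [he, Finset.card_powersetCard]
    rfl
  calc ∑ v, (Γ.degree v).choose p
      = ∑ S ∈ Finset.univ.powersetCard p, ∑ v : Fin n,
          (if S ⊆ Γ.neighborFinset v then 1 else 0) := by
        rw [← Finset.sum_comm]; exact Finset.sum_congr rfl fun v _ => key v
    _ ≤ ∑ S ∈ Finset.univ.powersetCard p, b := by
        refine Finset.sum_le_sum fun S hS => ?_
        rw [← Finset.card_filter]
        exact h S (Finset.mem_powersetCard.mp hS).2
    _ = (n.choose p) * b := by
        rw [Finset.sum_const, Finset.card_powersetCard, Finset.card_univ, Fintype.card_fin,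
          smul_eq_mul]

lemma main_ramsey (p q k n : ℕ) (hp : 2 ≤ p) (hpq : p ≤ q) (hk : 2 ≤ k)
    (hn : n = 8^p * (q+p) * k^p) (Γ : SimpleGraph (Fin n))
    (h1 : ¬ Γ.ContainsCopy (completeBipartiteGraph (Fin p) (Fin q)))
    (h2 : ¬ Γᶜ.ContainsCopy (⊤ : SimpleGraph (Fin k))) : False := by
  classical
  obtain ⟨p', rfl⟩ : ∃ p', p = p' + 1 := ⟨p - 1, by omega⟩
  set M := 8^p' * (q+(p'+1)) * k^p' with hM
  have hMge : p' + 1 ≤ M := by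
    calc p' + 1 ≤ 1 * (q + (p'+1)) * 1 := by omega
      _ ≤ 8^p' * (q+(p'+1)) * k^p' :=
        Nat.mul_le_mul (Nat.mul_le_mul_right _ (Nat.one_le_two_pow.trans
          (Nat.pow_le_pow_left (by omega) _))) (Nat.one_le_two_pow.trans
          (Nat.pow_le_pow_left (by omega) _))
  have hnM : n = 8 * k * M := by rw [hn, hM, pow_succ, pow_succ]; ring
  set D := 4 * M with hD
  have hind : ∀ I : Finset (Fin n), I.card = k → ¬(∀ x ∈ I, ∀ y ∈ I, ¬ Γ.Adj x y) :=
    fun I hI hcond => h2 (indep_copy Γ I hI hcond)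
  set B := Finset.univ.filter (fun v : Fin n => Γ.degree v < D) with hB
  have hBcard : B.card < k * D := by
    by_contra hc
    push_neg at hc
    obtain ⟨I, hIsub, hIcard, hIind⟩ := greedy_indep Γ (D-1) k B
      (fun v hv => by
        have hle : (Γ.neighborFinset v ∩ B).card ≤ Γ.degree v :=
          Finset.card_le_card Finset.inter_subset_left
        have hv' := (Finset.mem_filter.mp hv).2
        omega)
      (by have : 1 ≤ D := by omega
          have : k * (D - 1 + 1) = k * D := by congr 1; omega
          omega)
    exact hind I hIcard hIind
  set A := Finset.univ.filter (fun v : Fin n => ¬ Γ.degree v < D) with hA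
  have hAB : B.card + A.card = n := by
    rw [hB, hA, Finset.card_filter_add_card_filter_not, Finset.card_univ,
      Fintype.card_fin]
  have hkD : k * D = 4 * k * M := by rw [hD]; ring
  have hAcard : 4*k*M + 1 ≤ A.card := by
    have e : n = 4*k*M + 4*k*M := by rw [hnM]; ring
    have e2 : B.card < 4*k*M := by rw [← hkD]; exact hBcard
    omega
  have hlow : A.card * (D.choose (p'+1)) ≤ ∑ v, (Γ.degree v).choose (p'+1) := by
    calc A.card * D.choose (p'+1) = ∑ _v ∈ A, D.choose (p'+1) := by
          rw [Finset.sum_const, smul_eq_mul]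
      _ ≤ ∑ v ∈ A, (Γ.degree v).choose (p'+1) := by
          refine Finset.sum_le_sum fun v hv => Nat.choose_le_choose _ ?_
          have := (Finset.mem_filter.mp hv).2
          omega
      _ ≤ ∑ v, (Γ.degree v).choose (p'+1) :=
          Finset.sum_le_sum_of_subset (Finset.subset_univ _)
  have hup := double_count Γ (q-1) (common_bound (by omega) Γ h1)
  have hcomb : (4*k*M+1) * D.choose (p'+1) ≤ n.choose (p'+1) * (q-1) :=
    le_trans (Nat.mul_le_mul_right _ hAcard) (le_trans hlow hup)
  -- multiply through by (p'+1)!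
  have h2MD : 2*M ≤ D + 1 - (p'+1) := by omega
  have hfinal : (4*k*M+1) * (2*M)^(p'+1) ≤ n^(p'+1) * (q-1) := by
    calc (4*k*M+1) * (2*M)^(p'+1)
        ≤ (4*k*M+1) * D.descFactorial (p'+1) :=
          Nat.mul_le_mul_left _ ((Nat.pow_le_pow_left h2MD _).trans
            (D.pow_sub_le_descFactorial _))
      _ = (Nat.factorial (p'+1)) * ((4*k*M+1) * D.choose (p'+1)) := by
          rw [Nat.descFactorial_eq_factorial_mul_choose]; ring
      _ ≤ (Nat.factorial (p'+1)) * (n.choose (p'+1) * (q-1)) := Nat.mul_le_mul_left _ hcomb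
      _ = n.descFactorial (p'+1) * (q-1) := by
          rw [Nat.descFactorial_eq_factorial_mul_choose]; ring
      _ ≤ n^(p'+1) * (q-1) := Nat.mul_le_mul_right _ (Nat.descFactorial_le_pow _ _)
  -- final numeric contradiction
  have hZ : (1:ℕ) ≤ 2^p' := Nat.one_le_two_pow
  have hq1 : q - 1 < (q+(p'+1)) * 2^p' := by
    calc q - 1 < (q + (p'+1)) * 1 := by omega
      _ ≤ (q+(p'+1)) * 2^p' := Nat.mul_le_mul_left _ hZ
  have key : 8*8^p'*(k^p'*k)*(q-1) < 4*k*M*(2*2^p') := by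
    calc 8*8^p'*(k^p'*k)*(q-1) < 8*8^p'*(k^p'*k)*((q+(p'+1))*2^p') := by
          refine mul_lt_mul_of_pos_left hq1 ?_
          have : 1 ≤ k^p' := Nat.one_le_two_pow.trans (Nat.pow_le_pow_left hk _)
          positivity
      _ = 4*k*(8^p' * (q+(p'+1)) * k^p')*(2*2^p') := by ring
      _ = 4*k*M*(2*2^p') := by rw [hM]
  have final_lt : n^(p'+1) * (q-1) < (4*k*M+1) * (2*M)^(p'+1) := by
    have e1 : n^(p'+1) = (8*8^p')*(k^p'*k)*M^(p'+1) := by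
      rw [hnM, mul_pow, mul_pow, pow_succ, pow_succ]; ring
    have e2 : (2*M)^(p'+1) = (2*2^p')*M^(p'+1) := by
      rw [mul_pow, pow_succ]; ring
    have hMp : 0 < M^(p'+1) := by positivity
    calc n^(p'+1) * (q-1) = (8*8^p'*(k^p'*k)*(q-1)) * M^(p'+1) := by rw [e1]; ring
      _ < (4*k*M*(2*2^p')) * M^(p'+1) := mul_lt_mul_of_pos_right key hMp
      _ = (4*k*M) * (2*M)^(p'+1) := by rw [e2]; ring
      _ ≤ (4*k*M+1) * (2*M)^(p'+1) := Nat.mul_le_mul_right _ (by omega)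
  exact absurd hfinal (not_le.mpr final_lt)

end Helpers

theorem stmt_12 (p q : ℕ) (hp : 2 ≤ p) (hpq : p ≤ q) :
    ∃ C : ℝ, 0 < C ∧ ∀ k : ℕ, 2 ≤ k →
      (ramseyNumber (completeBipartiteGraph (Fin p) (Fin q)) (⊤ : SimpleGraph (Fin k)) : ℝ) ≤
        C * (k : ℝ) ^ p := by
  refine ⟨((8^p * (q+p) : ℕ) : ℝ), by
    have : 0 < q + p := by omega
    positivity, fun k hk => ?_⟩
  have hpos : 0 < 8^p * (q+p) * k^p := by
    have h1 : 0 < q + p := by omega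
    positivity
  have hmem : (8^p * (q+p) * k^p) ∈ {n : ℕ | 0 < n ∧
      RamseyProp n (completeBipartiteGraph (Fin p) (Fin q)) (⊤ : SimpleGraph (Fin k))} := by
    refine ⟨hpos, fun Γ => ?_⟩
    by_contra hcon
    push_neg at hcon
    exact main_ramsey p q k _ hp hpq hk rfl Γ hcon.1 hcon.2
  have hle := Nat.sInf_le hmem
  calc (ramseyNumber (completeBipartiteGraph (Fin p) (Fin q)) (⊤ : SimpleGraph (Fin k)) : ℝ)
      ≤ ((8^p * (q+p) * k^p : ℕ) : ℝ) := Nat.cast_le.mpr hle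
    _ = ((8^p * (q+p) : ℕ) : ℝ) * (k : ℝ)^p := by push_cast; ring
end
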